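/- arXiv:2507.06228 — 5 statements merged into one kernel-verified Lean document; each statement's English description precedes it below -/
import Mathlib

section
/- Let η denote the Minkowski bilinear form on ℝ⁴, η(x,y) = −x₀y₀ + x₁y₁ + x₂y₂ + x₃y₃, with matrix η_{μν} = diag(−1,1,1,1). Suppose (u,v,l,n) is a basis of ℝ⁴ satisfying the coframe identity u_μ v_ν + u_ν v_μ + l_μ l_ν + n_μ n_ν = η_{μν} for all μ,ν ∈ {0,1,2,3}, and suppose u₀ ≠ 0. Then there exists a unique w ∈ ℝ⁴ with η(w,u) = 0 and η(w,v) = 0 such that the gauge-transformed tuple (u, v̄, l̄, n̄) := (u, v − ½η(w,w)·u + w, l − η(w,l)·u, n − η(w,n)·u) satisfies l̄₀ = 0 and n̄₀ = 0; this w is given explicitly by w = (l₀·l + n₀·n)/u₀, and the transformed tuple moreover satisfies v̄₀ = −1/(2u₀) and v̄ᵢ = uᵢ/(2u₀²) for i = 1,2,3. -/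
noncomputable section

/-- The Minkowski bilinear form on `ℝ⁴` with signature `(−,+,+,+)`. -/
def eta (x y : Fin 4 → ℝ) : ℝ :=
  -(x 0 * y 0) + x 1 * y 1 + x 2 * y 2 + x 3 * y 3

/-- The matrix `η_{μν} = diag(−1,1,1,1)` of the Minkowski form. -/
def etaMat (μ ν : Fin 4) : ℝ :=
  if μ = ν then (if μ = 0 then -1 else 1) else 0

/-!
Read as a matrix identity, the coframe identity says that
`a = η(a,u) v + η(a,v) u + η(a,l) l + η(a,n) n` for every `a`; since `u, v, l, n` are
independent, their Minkowski products are those of a null pair with `η(u,v) = 1` orthogonal to an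
orthonormal pair. The constraints `η(w,u) = η(w,v) = 0`, `η(w,l) = l₀/u₀`, `η(w,n) = n₀/u₀` fix
all four coefficients of `w` in this expansion, so they have the single solution
`w = (l₀ l + n₀ n)/u₀`. The formula for `v̄` is then the `(0,0)` and `(0,i)` components of the
coframe identity.
-/

lemma eta_comm (x y : Fin 4 → ℝ) : eta x y = eta y x := by
  simp only [eta]; ring

lemma LinearIndependent.eq_zero_of_fin_four {R M : Type*} [Ring R] [AddCommGroup M] [Module R M]
    {x : Fin 4 → M} (hx : LinearIndependent R x) {a b c d : R}
    (h : a • x 0 + b • x 1 + c • x 2 + d • x 3 = 0) :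
    a = 0 ∧ b = 0 ∧ c = 0 ∧ d = 0 := by
  have hcoeff := Fintype.linearIndependent_iff.mp hx ![a, b, c, d]
    (by simpa [Fin.sum_univ_four] using h)
  exact ⟨hcoeff 0, hcoeff 1, hcoeff 2, hcoeff 3⟩

def adaptedGauge (u l n : Fin 4 → ℝ) : Fin 4 → ℝ :=
  fun μ => (l 0 * l μ + n 0 * n μ) / u 0

lemma eta_adaptedGauge_left (u l n y : Fin 4 → ℝ) :
    eta (adaptedGauge u l n) y = (l 0 * eta l y + n 0 * eta n y) / u 0 := by
  simp only [adaptedGauge, eta]; ring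

section Coframe

variable {u v l n : Fin 4 → ℝ}
  (hcof : ∀ μ ν : Fin 4, u μ * v ν + u ν * v μ + l μ * l ν + n μ * n ν = etaMat μ ν)
include hcof

lemma coframe_expansion (a : Fin 4 → ℝ) (ν : Fin 4) :
    a ν = eta a u * v ν + eta a v * u ν + eta a l * l ν + eta a n * n ν := by
  have h0 := hcof 0 ν
  have h1 := hcof 1 ν
  have h2 := hcof 2 ν
  have h3 := hcof 3 ν
  fin_cases ν <;>
    simp only [Fin.isValue, Fin.zero_eta, Fin.mk_one, Fin.reduceFinMk, Fin.reduceEq, etaMat, eta,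
      ↓reduceIte, one_ne_zero, zero_ne_one] at h0 h1 h2 h3 ⊢ <;>
    linear_combination a 0 * h0 - a 1 * h1 - a 2 * h2 - a 3 * h3

lemma coframe_coeffs (hindep : LinearIndependent ℝ ![u, v, l, n]) {a : Fin 4 → ℝ}
    {α β γ δ : ℝ} (ha : ∀ ν, a ν = α * u ν + β * v ν + γ * l ν + δ * n ν) :
    eta a v = α ∧ eta a u = β ∧ eta a l = γ ∧ eta a n = δ := by
  obtain ⟨h₁, h₂, h₃, h₄⟩ := hindep.eq_zero_of_fin_four (a := eta a v - α) (b := eta a u - β)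
    (c := eta a l - γ) (d := eta a n - δ) <| funext fun ν => by
      simp only [Matrix.cons_val, Pi.add_apply, Pi.smul_apply, smul_eq_mul, Pi.zero_apply]
      linear_combination ha ν - coframe_expansion hcof a ν
  exact ⟨sub_eq_zero.mp h₁, sub_eq_zero.mp h₂, sub_eq_zero.mp h₃, sub_eq_zero.mp h₄⟩

lemma coframe_gram (hindep : LinearIndependent ℝ ![u, v, l, n]) :
    eta u v = 1 ∧ eta u u = 0 ∧ eta u l = 0 ∧ eta u n = 0 ∧
    eta v v = 0 ∧ eta v l = 0 ∧ eta v n = 0 ∧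
    eta l l = 1 ∧ eta l n = 0 ∧ eta n n = 1 := by
  obtain ⟨huv, huu, hul, hun⟩ :=
    coframe_coeffs hcof hindep (a := u) (α := 1) (β := 0) (γ := 0) (δ := 0) fun _ => by ring
  obtain ⟨hvv, -, hvl, hvn⟩ :=
    coframe_coeffs hcof hindep (a := v) (α := 0) (β := 1) (γ := 0) (δ := 0) fun _ => by ring
  obtain ⟨-, -, hll, hln⟩ :=
    coframe_coeffs hcof hindep (a := l) (α := 0) (β := 0) (γ := 1) (δ := 0) fun _ => by ring
  obtain ⟨-, -, -, hnn⟩ :=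
    coframe_coeffs hcof hindep (a := n) (α := 0) (β := 0) (γ := 0) (δ := 1) fun _ => by ring
  exact ⟨huv, huu, hul, hun, hvv, hvl, hvn, hll, hln, hnn⟩

variable (hindep : LinearIndependent ℝ ![u, v, l, n])
include hindep

lemma eta_adaptedGauge_l : eta (adaptedGauge u l n) l = l 0 / u 0 := by
  obtain ⟨-, -, -, -, -, -, -, hll, hln, -⟩ := coframe_gram hcof hindep
  rw [eta_adaptedGauge_left, hll, eta_comm n, hln]
  ring

lemma eta_adaptedGauge_n : eta (adaptedGauge u l n) n = n 0 / u 0 := by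
  obtain ⟨-, -, -, -, -, -, -, -, hln, hnn⟩ := coframe_gram hcof hindep
  rw [eta_adaptedGauge_left, hln, hnn]
  ring

lemma eta_adaptedGauge_self :
    eta (adaptedGauge u l n) (adaptedGauge u l n) = (l 0 ^ 2 + n 0 ^ 2) / u 0 ^ 2 := by
  rw [eta_adaptedGauge_left, eta_comm l, eta_comm n, eta_adaptedGauge_l hcof hindep,
    eta_adaptedGauge_n hcof hindep]
  ring

variable (hu0 : u 0 ≠ 0)
include hu0

lemma adapted_iff_eq_adaptedGauge (w : Fin 4 → ℝ) :
    (eta w u = 0 ∧ eta w v = 0 ∧ l 0 - eta w l * u 0 = 0 ∧ n 0 - eta w n * u 0 = 0) ↔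
      w = adaptedGauge u l n := by
  constructor
  · rintro ⟨hwu, hwv, hwl, hwn⟩
    have hwl' : eta w l = l 0 / u 0 := by field_simp; linarith
    have hwn' : eta w n = n 0 / u 0 := by field_simp; linarith
    funext ν
    rw [coframe_expansion hcof w ν, hwu, hwv, hwl', hwn', adaptedGauge]
    ring
  · rintro rfl
    obtain ⟨-, -, hul, hun, -, hvl, hvn, -, -, -⟩ := coframe_gram hcof hindep
    refine ⟨?_, ?_, ?_, ?_⟩
    · rw [eta_adaptedGauge_left, eta_comm l, eta_comm n, hul, hun]; simp
    · rw [eta_adaptedGauge_left, eta_comm l, eta_comm n, hvl, hvn]; simp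
    · rw [eta_adaptedGauge_l hcof hindep]; field_simp; ring
    · rw [eta_adaptedGauge_n hcof hindep]; field_simp; ring

lemma adaptedGauge_transform_v_zero :
    v 0 - eta (adaptedGauge u l n) (adaptedGauge u l n) / 2 * u 0 + adaptedGauge u l n 0 =
      -(1 / (2 * u 0)) := by
  have h00 := hcof 0 0
  rw [eta_adaptedGauge_self hcof hindep, adaptedGauge]
  simp only [etaMat, if_true] at h00
  field_simp
  linear_combination h00

lemma adaptedGauge_transform_v_of_ne_zero {i : Fin 4} (hi : i ≠ 0) :
    v i - eta (adaptedGauge u l n) (adaptedGauge u l n) / 2 * u i + adaptedGauge u l n i =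
      u i / (2 * u 0 ^ 2) := by
  have h00 := hcof 0 0
  have h0i := hcof 0 i
  rw [eta_adaptedGauge_self hcof hindep, adaptedGauge]
  simp only [etaMat, if_true, if_neg hi.symm] at h00 h0i
  field_simp
  linear_combination 2 * u 0 * h0i - u i * h00

end Coframe

theorem adapted_representative_exists_unique_general
    (u v l n : Fin 4 → ℝ)
    (hindep : LinearIndependent ℝ ![u, v, l, n])
    (hcof : ∀ μ ν : Fin 4, u μ * v ν + u ν * v μ + l μ * l ν + n μ * n ν = etaMat μ ν)
    (hu0 : u 0 ≠ 0) :
    (∃! w : Fin 4 → ℝ, eta w u = 0 ∧ eta w v = 0 ∧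
        l 0 - eta w l * u 0 = 0 ∧ n 0 - eta w n * u 0 = 0) ∧
    ∀ w vbar : Fin 4 → ℝ,
      w = (fun μ => (l 0 * l μ + n 0 * n μ) / u 0) →
      vbar = (fun μ => v μ - eta w w / 2 * u μ + w μ) →
      (eta w u = 0 ∧ eta w v = 0 ∧
        l 0 - eta w l * u 0 = 0 ∧ n 0 - eta w n * u 0 = 0 ∧
        vbar 0 = -(1 / (2 * u 0)) ∧
        ∀ i : Fin 4, i ≠ 0 → vbar i = u i / (2 * u 0 ^ 2)) := by
  have hadapted := adapted_iff_eq_adaptedGauge hcof hindep hu0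
  refine ⟨⟨adaptedGauge u l n, (hadapted _).mpr rfl, fun w hw => (hadapted w).mp hw⟩, ?_⟩
  rintro w vbar rfl rfl
  obtain ⟨hwu, hwv, hwl, hwn⟩ := (hadapted (adaptedGauge u l n)).mpr rfl
  exact ⟨hwu, hwv, hwl, hwn, adaptedGauge_transform_v_zero hcof hindep hu0,
    fun i hi => adaptedGauge_transform_v_of_ne_zero hcof hindep hu0 hi⟩

/-- Pointwise form of the existence and uniqueness of the adapted representative of a
globally hyperbolic isotropic parallelism. -/
theorem adapted_representative_exists_unique
    (u v l n : Fin 4 → ℝ)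
    (hindep : LinearIndependent ℝ ![u, v, l, n])
    (hspan : Submodule.span ℝ (Set.range ![u, v, l, n]) = ⊤)
    (hcof : ∀ μ ν : Fin 4, u μ * v ν + u ν * v μ + l μ * l ν + n μ * n ν = etaMat μ ν)
    (hu0 : u 0 ≠ 0) :
    (∃! w : Fin 4 → ℝ, eta w u = 0 ∧ eta w v = 0 ∧
        l 0 - eta w l * u 0 = 0 ∧ n 0 - eta w n * u 0 = 0) ∧
    ∀ w vbar : Fin 4 → ℝ,
      w = (fun μ => (l 0 * l μ + n 0 * n μ) / u 0) →
      vbar = (fun μ => v μ - eta w w / 2 * u μ + w μ) →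
      (eta w u = 0 ∧ eta w v = 0 ∧
        l 0 - eta w l * u 0 = 0 ∧ n 0 - eta w n * u 0 = 0 ∧
        vbar 0 = -(1 / (2 * u 0)) ∧
        ∀ i : Fin 4, i ≠ 0 → vbar i = u i / (2 * u 0 ^ 2)) :=
  adapted_representative_exists_unique_general u v l n hindep hcof hu0
end
end

section
/- Let 𝔤 be a 3-dimensional real Lie algebra and let I ⊆ ℝ be an interval containing 0. Suppose: (i) λ : I → ℝ is differentiable and nowhere zero, and t ↦ Θ^t_{ab} is a differentiable family of symmetric real 3×3 matrices satisfying the integrability conditions on I; (ii) e = (e_u, e_l, e_n) is a basis of 𝔤* such that (e, Θ⁰) is a left-invariant parallel Cauchy pair; (iii) U : I → Mat(3×3, ℝ) is differentiable with ∂_t U^t_{ac} = −λ_t Σ_b Θ^t_{ab} U^t_{bc} for all a, c and U⁰ = Id. Define e^t_a := Σ_c U^t_{ac} e_c. Then each e^t is a basis of 𝔤* and the triple {λ_t, e^t, Θ^t} satisfies all four left-invariant parallel spinor flow equations (F1)–(F4) on I. -/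
/-! Put `A_t = -λ_t Θ^t`. The coframes `e^t = U^t e` solve the linear ODE `ė = A e`, which is (F1);
`U^t` stays invertible since a vector killed by `U^t` yields a solution vanishing at `t`, hence
at `0`. For fixed `X, Y` the defect of (F2), `e^t([X,Y]) + Θ^t (e^t ∧ e^t_u)(X, Y)`, solves the
same linear ODE by the integrability conditions, and it vanishes at `0` because `(e, Θ⁰)` is a
Cauchy pair, so it vanishes on `I`. Finally the integrability conditions say that the `u`-row of
`(Θ^t)²` is `|Θ^t_u|² δ_u` and that of `Θ̇^t` is `λ_t |Θ^t_u|² δ_u`, which gives (F3) directly and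
(F4) from (F2). -/

noncomputable section

variable {𝔤 : Type*} [LieRing 𝔤] [LieAlgebra ℝ 𝔤]

/-- A global left-invariant coframe: a triple of covectors forming a basis of `𝔤*`. -/
def IsCoframe (e : Fin 3 → Module.Dual ℝ 𝔤) : Prop :=
  LinearIndependent ℝ e ∧ Submodule.span ℝ (Set.range e) = ⊤

/-- Equation (F1) of the left-invariant parallel spinor flow at time `t`:
`∂ₜ e^t_a(X) + λ_t Σ_b Θ^t_{ab} e^t_b(X) = 0`. -/
def F1At (lam : ℝ → ℝ) (Θ : ℝ → Matrix (Fin 3) (Fin 3) ℝ)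
    (e : ℝ → Fin 3 → Module.Dual ℝ 𝔤) (t : ℝ) : Prop :=
  ∀ (a : Fin 3) (X : 𝔤),
    HasDerivAt (fun s => e s a X) (-(lam t * ∑ b, Θ t a b * e t b X)) t

/-- Equation (F2) of the left-invariant parallel spinor flow at time `t`:
`−e^t_a([X,Y]) = Σ_b Θ^t_{ab} (e^t_b(X) e^t_u(Y) − e^t_b(Y) e^t_u(X))`. -/
def F2At (Θ : ℝ → Matrix (Fin 3) (Fin 3) ℝ)
    (e : ℝ → Fin 3 → Module.Dual ℝ 𝔤) (t : ℝ) : Prop :=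
  ∀ (a : Fin 3) (X Y : 𝔤),
    -(e t a ⁅X, Y⁆) = ∑ b, Θ t a b * (e t b X * e t 0 Y - e t b Y * e t 0 X)

/-- Equation (F3) of the left-invariant parallel spinor flow at time `t`:
`∂ₜ (Σ_a Θ^t_{ua} e^t_a(X)) = 0`. -/
def F3At (Θ : ℝ → Matrix (Fin 3) (Fin 3) ℝ)
    (e : ℝ → Fin 3 → Module.Dual ℝ 𝔤) (t : ℝ) : Prop :=
  ∀ X : 𝔤, HasDerivAt (fun s => ∑ a, Θ s 0 a * e s a X) 0 t

/-- Equation (F4) of the left-invariant parallel spinor flow at time `t`: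
`Σ_a Θ^t_{ua} e^t_a([X,Y]) = 0`. -/
def F4At (Θ : ℝ → Matrix (Fin 3) (Fin 3) ℝ)
    (e : ℝ → Fin 3 → Module.Dual ℝ 𝔤) (t : ℝ) : Prop :=
  ∀ X Y : 𝔤, ∑ a, Θ t 0 a * e t a ⁅X, Y⁆ = 0

/-- The integrability conditions of the left-invariant parallel spinor flow for the
pair `(λ_t, Θ^t_{ab})` at time `t` (indices `u,l,n` are `0,1,2`). -/
def IntegrabilityAt (lam : ℝ → ℝ) (Θ : ℝ → Matrix (Fin 3) (Fin 3) ℝ) (t : ℝ) : Prop :=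
  deriv (fun s => Θ s 0 0) t
      = lam t * ((Θ t 0 0) ^ 2 + (Θ t 0 1) ^ 2 + (Θ t 0 2) ^ 2) ∧
  deriv (fun s => Θ s 0 1) t = 0 ∧
  deriv (fun s => Θ s 0 2) t = 0 ∧
  deriv (fun s => Θ s 1 1) t = lam t * (Θ t 1 1 * Θ t 0 0 - (Θ t 0 1) ^ 2) ∧
  deriv (fun s => Θ s 1 2) t = lam t * (Θ t 1 2 * Θ t 0 0 - Θ t 0 2 * Θ t 0 1) ∧
  deriv (fun s => Θ s 2 2) t = lam t * (Θ t 2 2 * Θ t 0 0 - (Θ t 0 2) ^ 2) ∧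
  Θ t 1 2 * Θ t 0 1 = Θ t 1 1 * Θ t 0 2 ∧
  Θ t 1 2 * Θ t 0 2 = Θ t 2 2 * Θ t 0 1 ∧
  Θ t 1 1 * Θ t 0 1 + Θ t 1 2 * Θ t 0 2 + Θ t 0 1 * Θ t 0 0 = 0 ∧
  Θ t 1 2 * Θ t 0 1 + Θ t 2 2 * Θ t 0 2 + Θ t 0 2 * Θ t 0 0 = 0

/-- A left-invariant parallel Cauchy pair: a coframe `e` of `𝔤*` together with a symmetric
matrix `Θ` satisfying the constraint `−e_a([X,Y]) = Σ_b Θ_{ab}(e_b(X)e_u(Y) − e_b(Y)e_u(X))`. -/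
def IsCauchyPair (e : Fin 3 → Module.Dual ℝ 𝔤) (Θ : Matrix (Fin 3) (Fin 3) ℝ) : Prop :=
  IsCoframe e ∧ Θ.IsSymm ∧
  ∀ (a : Fin 3) (X Y : 𝔤),
    -(e a ⁅X, Y⁆) = ∑ b, Θ a b * (e b X * e 0 Y - e b Y * e 0 X)

/-- `B_t = ∫₀ᵗ λ_τ dτ`. -/
def Bfun (lam : ℝ → ℝ) (t : ℝ) : ℝ := ∫ τ in (0:ℝ)..t, lam τ

open Set Matrix

section LinearODE

variable {E : Type*} [NormedAddCommGroup E] [NormedSpace ℝ E]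

theorem eq_zero_of_hasDerivAt_clm_apply {I : Set ℝ} (hI : I.OrdConnected)
    {A : ℝ → E →L[ℝ] E} (hA : ContinuousOn A I) {f : ℝ → E}
    (hf : ∀ t ∈ I, HasDerivAt f (A t (f t)) t) {t₀ t₁ : ℝ} (h₀ : t₀ ∈ I) (h₁ : t₁ ∈ I)
    (hf₀ : f t₀ = 0) : f t₁ = 0 := by
  have hJ : uIcc t₀ t₁ ⊆ I := hI.uIcc_subset h₀ h₁
  obtain ⟨C, hC⟩ := isCompact_uIcc.exists_bound_of_continuousOn (hA.mono hJ)
  have hlip : ∀ t ∈ uIcc t₀ t₁, LipschitzOnWith C.toNNReal (A t) univ := fun t ht =>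
    ((A t).lipschitz.weaken <| by
      rw [← NNReal.coe_le_coe, coe_nnnorm]
      exact (hC t ht).trans C.le_coe_toNNReal).lipschitzOnWith
  have hf' : ∀ t ∈ uIcc t₀ t₁, HasDerivAt f (A t (f t)) t := fun t ht => hf t (hJ ht)
  have hcont : ContinuousOn f (uIcc t₀ t₁) := HasDerivAt.continuousOn hf'
  have hzero : ∀ t, HasDerivAt (fun _ => (0 : E)) (A t 0) t := fun t => by
    simpa using hasDerivAt_const t (0 : E)
  rcases le_total t₀ t₁ with h | h
  · rw [uIcc_of_le h] at hlip hf' hcont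
    exact ODE_solution_unique_of_mem_Icc_right (fun t ht => hlip t (Ico_subset_Icc_self ht))
      hcont (fun t ht => (hf' t (Ico_subset_Icc_self ht)).hasDerivWithinAt)
      (fun _ _ => mem_univ _) continuousOn_const (fun t _ => (hzero t).hasDerivWithinAt)
      (fun _ _ => mem_univ _) hf₀ (right_mem_Icc.2 h)
  · rw [uIcc_of_ge h] at hlip hf' hcont
    exact ODE_solution_unique_of_mem_Icc_left (fun t ht => hlip t (Ioc_subset_Icc_self ht))
      hcont (fun t ht => (hf' t (Ioc_subset_Icc_self ht)).hasDerivWithinAt)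
      (fun _ _ => mem_univ _) continuousOn_const (fun t _ => (hzero t).hasDerivWithinAt)
      (fun _ _ => mem_univ _) hf₀ (left_mem_Icc.2 h)

end LinearODE

section MatrixODE

variable {m n : Type*} [Fintype n]

theorem eq_zero_of_hasDerivAt_mulVec [DecidableEq n] {I : Set ℝ} (hI : I.OrdConnected)
    {M : ℝ → Matrix n n ℝ} (hM : ContinuousOn M I) {f : ℝ → n → ℝ}
    (hf : ∀ t ∈ I, HasDerivAt f (M t *ᵥ f t) t) {t₀ t₁ : ℝ} (h₀ : t₀ ∈ I) (h₁ : t₁ ∈ I)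
    (hf₀ : f t₀ = 0) : f t₁ = 0 :=
  let Φ : Matrix n n ℝ →ₗ[ℝ] (n → ℝ) →L[ℝ] n → ℝ :=
    LinearMap.toContinuousLinearMap.toLinearMap ∘ₗ Matrix.toLin'.toLinearMap
  eq_zero_of_hasDerivAt_clm_apply hI (Φ.continuous_of_finiteDimensional.comp_continuousOn hM)
    hf h₀ h₁ hf₀

theorem isUnit_of_hasDerivAt_mulVec [DecidableEq n] {I : Set ℝ} (hI : I.OrdConnected)
    {M U : ℝ → Matrix n n ℝ} (hM : ContinuousOn M I)
    (hU : ∀ t ∈ I, ∀ w, HasDerivAt (fun s => U s *ᵥ w) (M t *ᵥ (U t *ᵥ w)) t)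
    {t₀ t : ℝ} (h₀ : t₀ ∈ I) (hU₀ : IsUnit (U t₀)) (ht : t ∈ I) : IsUnit (U t) := by
  refine mulVec_injective_iff_isUnit.1 fun v w hvw => sub_eq_zero.1 ?_
  have hzero : U t *ᵥ (v - w) = 0 := by rw [mulVec_sub, hvw, sub_self]
  exact mulVec_injective_iff_isUnit.2 hU₀ <| by
    rw [eq_zero_of_hasDerivAt_mulVec hI hM (fun s hs => hU s hs (v - w)) ht h₀ hzero, mulVec_zero]

theorem HasDerivAt.mulVec [Fintype m] {M : ℝ → Matrix m n ℝ} {M' : Matrix m n ℝ}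
    {w : ℝ → n → ℝ} {w' : n → ℝ} {t : ℝ}
    (hM : ∀ i j, HasDerivAt (fun s => M s i j) (M' i j) t) (hw : HasDerivAt w w' t) :
    HasDerivAt (fun s => M s *ᵥ w s) (M' *ᵥ w t + M t *ᵥ w') t := by
  refine hasDerivAt_pi.2 fun i => ?_
  have := HasDerivAt.fun_sum (u := Finset.univ) fun j _ => (hM i j).mul (hasDerivAt_pi.1 hw j)
  simpa [Matrix.mulVec, dotProduct, Finset.sum_add_distrib] using this

end MatrixODE

section Coframe

variable {ι R M : Type*} [Fintype ι] [CommRing R] [AddCommGroup M] [Module R M]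

theorem sum_smul_eq_linearCombination_comp_row (v : ι → M) (P : Matrix ι ι R) :
    (fun a => ∑ c, P a c • v c) = Fintype.linearCombination R v ∘ P.row := by
  ext a
  simp [Fintype.linearCombination_apply]

theorem LinearIndependent.sum_smul_of_isUnit [DecidableEq ι] {v : ι → M}
    (hv : LinearIndependent R v) {P : Matrix ι ι R} (hP : IsUnit P) :
    LinearIndependent R fun a => ∑ c, P a c • v c := by
  rw [linearIndependent_iff_injective_fintypeLinearCombination] at hv
  rw [sum_smul_eq_linearCombination_comp_row]
  exact (linearIndependent_rows_of_isUnit hP).map' _ (LinearMap.ker_eq_bot.2 hv)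

theorem span_range_sum_smul_of_isUnit [DecidableEq ι] (v : ι → M) {P : Matrix ι ι R}
    (hP : IsUnit P) :
    Submodule.span R (range fun a => ∑ c, P a c • v c) = Submodule.span R (range v) := by
  rw [sum_smul_eq_linearCombination_comp_row, range_comp, Submodule.span_image,
    ← range_vecMulLinear, LinearMap.range_eq_top.2 (vecMul_surjective_iff_isUnit.2 hP),
    Submodule.map_top, Fintype.range_linearCombination]

theorem IsCoframe.sum_smul_of_isUnit {e : Fin 3 → Module.Dual ℝ 𝔤} (he : IsCoframe e)
    {P : Matrix (Fin 3) (Fin 3) ℝ} (hP : IsUnit P) : IsCoframe fun a => ∑ c, P a c • e c :=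
  ⟨he.1.sum_smul_of_isUnit hP, (span_range_sum_smul_of_isUnit e hP).trans he.2⟩

end Coframe

/-- With `x = e(X)` and `y = e(Y)`, `wedgeU x y b = (e_b ∧ e_u)(X, Y)`. -/
def wedgeU (x y : Fin 3 → ℝ) : Fin 3 → ℝ := y 0 • x - x 0 • y

theorem HasDerivAt.wedgeU {x y : ℝ → Fin 3 → ℝ} {x' y' : Fin 3 → ℝ} {t : ℝ}
    (hx : HasDerivAt x x' t) (hy : HasDerivAt y y' t) :
    HasDerivAt (fun s => wedgeU (x s) (y s)) (wedgeU x' (y t) + wedgeU (x t) y') t := by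
  refine (((hasDerivAt_pi.1 hy 0).smul hx).sub ((hasDerivAt_pi.1 hx 0).smul hy)).congr_deriv ?_
  simp only [_root_.wedgeU]
  module

def derivMatrix (Θ : ℝ → Matrix (Fin 3) (Fin 3) ℝ) (t : ℝ) : Matrix (Fin 3) (Fin 3) ℝ :=
  Matrix.of fun a b => deriv (fun s => Θ s a b) t

section Flow

variable {lam : ℝ → ℝ} {Θ : ℝ → Matrix (Fin 3) (Fin 3) ℝ} {t : ℝ}

theorem IntegrabilityAt.derivMatrix_mulVec_apply_zero (h : IntegrabilityAt lam Θ t)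
    (x : Fin 3 → ℝ) : (derivMatrix Θ t *ᵥ x) 0 = lam t * (∑ a, Θ t 0 a ^ 2) * x 0 := by
  obtain ⟨h00, h01, h02, -⟩ := h
  simp [derivMatrix, mulVec, dotProduct, Fin.sum_univ_three, h00, h01, h02]

theorem IntegrabilityAt.mulVec_mulVec_apply_zero (h : IntegrabilityAt lam Θ t)
    (hΘ : (Θ t).IsSymm) (x : Fin 3 → ℝ) :
    (Θ t *ᵥ (Θ t *ᵥ x)) 0 = (∑ a, Θ t 0 a ^ 2) * x 0 := by
  obtain ⟨-, -, -, -, -, -, -, -, c9, c10⟩ := h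
  have hsym : ∀ i j, Θ t i j = Θ t j i := fun i j => hΘ.apply j i
  simp only [mulVec, dotProduct, Fin.isValue, Fin.sum_univ_three, hsym 1 0, hsym 2 0, hsym 2 1]
  linear_combination x 1 * c9 + x 2 * c10

theorem IntegrabilityAt.derivMatrix_mulVec_wedgeU (h : IntegrabilityAt lam Θ t)
    (hΘ : ∀ s, (Θ s).IsSymm) (x y : Fin 3 → ℝ) :
    derivMatrix Θ t *ᵥ wedgeU x y = lam t • wedgeU (Θ t *ᵥ x) (Θ t *ᵥ y) := by
  obtain ⟨h00, h01, h02, h11, h12, h22, c7, c8, -⟩ := h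
  have hsym : ∀ s i j, Θ s i j = Θ s j i := fun s i j => (hΘ s).apply j i
  have d10 : deriv (fun s => Θ s 1 0) t = 0 := by simp_rw [hsym _ 1 0]; exact h01
  have d20 : deriv (fun s => Θ s 2 0) t = 0 := by simp_rw [hsym _ 2 0]; exact h02
  have d21 : deriv (fun s => Θ s 2 1) t = deriv (fun s => Θ s 1 2) t := by simp_rw [hsym _ 2 1]
  ext a
  fin_cases a <;>
    simp only [mulVec, dotProduct, derivMatrix, of_apply, wedgeU, Pi.sub_apply, Pi.smul_apply,
      smul_eq_mul, Fin.sum_univ_three, Fin.isValue, Fin.zero_eta, Fin.mk_one, Fin.reduceFinMk, h00,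
      h01, h02, d10, d20, d21, h11, h12, h22, zero_mul, add_zero, zero_add, hsym t 1 0, hsym t 2 0,
      hsym t 2 1]
  · ring
  -- for `a = l, n` what remains is the `(a,u) × (l,n)` minor of `Θ`, which vanishes by `c7`, `c8`
  · linear_combination lam t * (x 1 * y 2 - x 2 * y 1) * c7
  · linear_combination -lam t * (x 1 * y 2 - x 2 * y 1) * c8

theorem hasDerivAt_add_mulVec_wedgeU {x y z : ℝ → Fin 3 → ℝ}
    (hx : HasDerivAt x ((-lam t • Θ t) *ᵥ x t) t) (hy : HasDerivAt y ((-lam t • Θ t) *ᵥ y t) t)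
    (hz : HasDerivAt z ((-lam t • Θ t) *ᵥ z t) t)
    (hΘ : ∀ a b, DifferentiableAt ℝ (fun s => Θ s a b) t) (h : IntegrabilityAt lam Θ t)
    (hsymm : ∀ s, (Θ s).IsSymm) :
    HasDerivAt (fun s => z s + Θ s *ᵥ wedgeU (x s) (y s))
      ((-lam t • Θ t) *ᵥ (z t + Θ t *ᵥ wedgeU (x t) (y t))) t := by
  refine (hz.add (HasDerivAt.mulVec (M' := derivMatrix Θ t) (fun a b => (hΘ a b).hasDerivAt)
    (hx.wedgeU hy))).congr_deriv ?_
  -- `Θ (wedgeU (Θx) y + wedgeU x (Θy)) = Θ² (wedgeU x y) + wedgeU (Θx) (Θy)`, and the last term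
  -- cancels against `Θ̇ (wedgeU x y)`.
  rw [h.derivMatrix_mulVec_wedgeU hsymm]
  simp only [wedgeU, mulVec_add, mulVec_sub, mulVec_smul, smul_mulVec, Pi.smul_apply, smul_eq_mul]
  module

variable {E : ℝ → Fin 3 → Module.Dual ℝ 𝔤}

theorem f1At_of_hasDerivAt
    (hE : ∀ X, HasDerivAt (fun s a => E s a X) ((-lam t • Θ t) *ᵥ fun a => E t a X) t) :
    F1At lam Θ E t := fun a X =>
  (hasDerivAt_pi.1 (hE X) a).congr_deriv <| by
    simp [mulVec, dotProduct, Finset.mul_sum, mul_assoc]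

theorem f2At_iff : F2At Θ E t ↔
    ∀ X Y, (fun a => E t a ⁅X, Y⁆) + Θ t *ᵥ wedgeU (fun a => E t a X) (fun a => E t a Y) = 0 := by
  have hω : ∀ X Y a, (Θ t *ᵥ wedgeU (fun a => E t a X) (fun a => E t a Y)) a =
      ∑ b, Θ t a b * (E t b X * E t 0 Y - E t b Y * E t 0 X) := fun X Y a => by
    simp only [mulVec, dotProduct, wedgeU, Pi.sub_apply, Pi.smul_apply, smul_eq_mul]
    exact Finset.sum_congr rfl fun b _ => by ring
  constructor
  · intro h X Y
    ext a
    rw [Pi.add_apply, hω, ← h a X Y, add_neg_cancel, Pi.zero_apply]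
  · intro h a X Y
    have := congrFun (h X Y) a
    rw [Pi.add_apply, hω, Pi.zero_apply] at this
    linarith

theorem f3At_of_hasDerivAt
    (hE : ∀ X, HasDerivAt (fun s a => E s a X) ((-lam t • Θ t) *ᵥ fun a => E t a X) t)
    (hΘ : ∀ a b, DifferentiableAt ℝ (fun s => Θ s a b) t) (h : IntegrabilityAt lam Θ t)
    (hsymm : (Θ t).IsSymm) : F3At Θ E t := fun X =>
  (hasDerivAt_pi.1 (HasDerivAt.mulVec (M' := derivMatrix Θ t) (fun a b => (hΘ a b).hasDerivAt)
    (hE X)) 0).congr_deriv <| by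
    rw [Pi.add_apply, h.derivMatrix_mulVec_apply_zero, smul_mulVec, mulVec_smul, Pi.smul_apply,
      h.mulVec_mulVec_apply_zero hsymm, smul_eq_mul]
    ring

theorem f4At_of_f2At (h2 : F2At Θ E t) (h : IntegrabilityAt lam Θ t) (hsymm : (Θ t).IsSymm) :
    F4At Θ E t := fun X Y => by
  change (Θ t *ᵥ fun a => E t a ⁅X, Y⁆) 0 = 0
  rw [eq_neg_of_add_eq_zero_left (f2At_iff.1 h2 X Y), mulVec_neg, Pi.neg_apply,
    h.mulVec_mulVec_apply_zero hsymm]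
  simp [wedgeU, mul_comm]

theorem F2At.propagate {I : Set ℝ} (hI : I.OrdConnected)
    (hA : ContinuousOn (fun s => -lam s • Θ s) I)
    (hE : ∀ t ∈ I, ∀ X, HasDerivAt (fun s a => E s a X) ((-lam t • Θ t) *ᵥ fun a => E t a X) t)
    (hΘ : ∀ a b, ∀ t ∈ I, DifferentiableAt ℝ (fun s => Θ s a b) t)
    (hint : ∀ t ∈ I, IntegrabilityAt lam Θ t) (hsymm : ∀ s, (Θ s).IsSymm)
    {t₀ : ℝ} (h₀ : t₀ ∈ I) (hF₀ : F2At Θ E t₀) (ht : t ∈ I) : F2At Θ E t := by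
  rw [f2At_iff] at hF₀ ⊢
  exact fun X Y => eq_zero_of_hasDerivAt_mulVec hI hA
    (fun s hs => hasDerivAt_add_mulVec_wedgeU (hE s hs X) (hE s hs Y) (hE s hs ⁅X, Y⁆)
      (fun a b => hΘ a b s hs) (hint s hs) hsymm) h₀ ht (hF₀ X Y)

end Flow

theorem flow_of_admissible_integrability_solution_general
    {𝔤 : Type*} [LieRing 𝔤] [LieAlgebra ℝ 𝔤]
    (I : Set ℝ) (h0I : (0:ℝ) ∈ I) (hI : I.OrdConnected)
    (lam : ℝ → ℝ) (hlamdiff : ∀ t ∈ I, DifferentiableAt ℝ lam t)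
    (Θ : ℝ → Matrix (Fin 3) (Fin 3) ℝ)
    (hΘsymm : ∀ t, (Θ t).IsSymm)
    (hΘdiff : ∀ a b : Fin 3, ∀ t ∈ I, DifferentiableAt ℝ (fun s => Θ s a b) t)
    (hint : ∀ t ∈ I, IntegrabilityAt lam Θ t)
    (e : Fin 3 → Module.Dual ℝ 𝔤)
    (hCauchy : IsCauchyPair e (Θ 0))
    (U : ℝ → Matrix (Fin 3) (Fin 3) ℝ)
    (hU : ∀ t ∈ I, ∀ a c : Fin 3,
      HasDerivAt (fun s => U s a c) (-(lam t * ∑ b, Θ t a b * U t b c)) t)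
    (hU0 : U 0 = 1) :
    (∀ t ∈ I, IsCoframe (fun a => ∑ c, U t a c • e c)) ∧
    (∀ t ∈ I,
      F1At lam Θ (fun s a => ∑ c, U s a c • e c) t ∧
      F2At Θ (fun s a => ∑ c, U s a c • e c) t ∧
      F3At Θ (fun s a => ∑ c, U s a c • e c) t ∧
      F4At Θ (fun s a => ∑ c, U s a c • e c) t) := by
  set E : ℝ → Fin 3 → Module.Dual ℝ 𝔤 := fun s a => ∑ c, U s a c • e c
  have hA : ContinuousOn (fun s => -lam s • Θ s) I := fun s hs =>
    ((hlamdiff s hs).continuousAt.neg.smul (continuousAt_pi.2 fun a =>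
      continuousAt_pi.2 fun b => (hΘdiff a b s hs).continuousAt)).continuousWithinAt
  have hUw : ∀ t ∈ I, ∀ w, HasDerivAt (fun s => U s *ᵥ w) ((-lam t • Θ t) *ᵥ (U t *ᵥ w)) t :=
    fun t ht w => (HasDerivAt.mulVec (M' := (-lam t • Θ t) * U t)
      (fun a c => (hU t ht a c).congr_deriv (by simp [mul_apply, Finset.mul_sum, mul_assoc]))
      (hasDerivAt_const t w)).congr_deriv (by rw [mulVec_zero, add_zero, mulVec_mulVec])
  have hE : ∀ t ∈ I, ∀ X,
      HasDerivAt (fun s a => E s a X) ((-lam t • Θ t) *ᵥ fun a => E t a X) t := by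
    have hEX : ∀ X, (fun s a => E s a X) = fun s => U s *ᵥ fun c => e c X := fun X => by
      ext s a; simp [E, mulVec, dotProduct]
    intro t ht X
    rw [hEX]
    exact hUw t ht _
  have hE0 : E 0 = e := by ext a; simp [E, hU0, one_apply]
  have hF2 : ∀ t ∈ I, F2At Θ E t := fun t =>
    F2At.propagate hI hA hE hΘdiff hint hΘsymm h0I (by rw [F2At, hE0]; exact hCauchy.2.2)
  refine ⟨fun t ht => hCauchy.1.sum_smul_of_isUnit
    (isUnit_of_hasDerivAt_mulVec hI hA hUw h0I (by rw [hU0]; exact isUnit_one) ht),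
    fun t ht => ⟨f1At_of_hasDerivAt (hE t ht), hF2 t ht,
      f3At_of_hasDerivAt (hE t ht) (hΘdiff · · t ht) (hint t ht) (hΘsymm t),
      f4At_of_f2At (hF2 t ht) (hint t ht) (hΘsymm t)⟩⟩

/-- If `(λ_t, Θ^t)` is an admissible solution of the integrability conditions (admissible
meaning that `(e, Θ⁰)` is a left-invariant parallel Cauchy pair) and `U` solves the linear
ODE `∂ₜ U^t_{ac} = −λ_t Σ_b Θ^t_{ab} U^t_{bc}` with `U⁰ = Id`, then `e^t_a := Σ_c U^t_{ac} e_c`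
is a family of coframes and `{λ_t, e^t, Θ^t}` is a left-invariant parallel spinor flow. -/
theorem flow_of_admissible_integrability_solution
    {𝔤 : Type*} [LieRing 𝔤] [LieAlgebra ℝ 𝔤]
    (hdim : Module.finrank ℝ 𝔤 = 3)
    (I : Set ℝ) (h0I : (0:ℝ) ∈ I) (hI : I.OrdConnected)
    (lam : ℝ → ℝ) (hlamdiff : ∀ t ∈ I, DifferentiableAt ℝ lam t)
    (hlam0 : ∀ t ∈ I, lam t ≠ 0)
    (Θ : ℝ → Matrix (Fin 3) (Fin 3) ℝ)
    (hΘsymm : ∀ t, (Θ t).IsSymm)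
    (hΘdiff : ∀ a b : Fin 3, ∀ t ∈ I, DifferentiableAt ℝ (fun s => Θ s a b) t)
    (hint : ∀ t ∈ I, IntegrabilityAt lam Θ t)
    (e : Fin 3 → Module.Dual ℝ 𝔤)
    (hCauchy : IsCauchyPair e (Θ 0))
    (U : ℝ → Matrix (Fin 3) (Fin 3) ℝ)
    (hU : ∀ t ∈ I, ∀ a c : Fin 3,
      HasDerivAt (fun s => U s a c) (-(lam t * ∑ b, Θ t a b * U t b c)) t)
    (hU0 : U 0 = 1) :
    (∀ t ∈ I, IsCoframe (fun a => ∑ c, U t a c • e c)) ∧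
    (∀ t ∈ I,
      F1At lam Θ (fun s a => ∑ c, U s a c • e c) t ∧
      F2At Θ (fun s a => ∑ c, U s a c • e c) t ∧
      F3At Θ (fun s a => ∑ c, U s a c • e c) t ∧
      F4At Θ (fun s a => ∑ c, U s a c • e c) t) :=
  flow_of_admissible_integrability_solution_general I h0I hI lam hlamdiff Θ hΘsymm hΘdiff hint e
    hCauchy U hU hU0
end
end

section
/- Let 𝔤 be a 3-dimensional real Lie algebra and (e, Θ) a left-invariant parallel Cauchy pair with Θ_{ul} = Θ_{un} = 0 (quasi-diagonal) and Θ_{uu} ≠ 0. Let λ : ℝ → ℝ be smooth and nowhere zero, B_t := ∫₀^t λ_τ dτ, and let I be an interval containing 0 on which 1 − Θ_{uu} B_t > 0. Let Q be an orthogonal 2×2 real matrix with (1/Θ_{uu})·[[Θ_{ll}, Θ_{ln}],[Θ_{ln}, Θ_{nn}]] = Q·diag(ρ₊, ρ₋)·Qᵀ for real numbers ρ₊, ρ₋. Define on I: e^t_u := (1 − Θ_{uu} B_t)·e_u and (e^t_l, e^t_n)ᵀ := Q·diag((1 − Θ_{uu} B_t)^{ρ₊}, (1 − Θ_{uu} B_t)^{ρ₋})·Qᵀ·(e_l,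 e_n)ᵀ, and define the family of symmetric matrices Θ^t by Θ^t_{uu} := Θ_{uu}/(1 − Θ_{uu} B_t), Θ^t_{ij} := Θ_{ij}/(1 − Θ_{uu} B_t) for i,j ∈ {l,n}, and Θ^t_{ul} = Θ^t_{un} := 0. Then the triple {λ_t, e^t, Θ^t} satisfies the left-invariant parallel spinor flow equations (F1)–(F4) on I, and e⁰ = e. -/
noncomputable section

variable {𝔤 : Type*} [LieRing 𝔤] [LieAlgebra ℝ 𝔤]

/-
Write `g t = 1 - Θ_uu B_t`, so that `g' = -Θ_uu λ`. Quasi-diagonality and the diagonalisation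
of the `(l,n)`-block give `Θ = Θ_uu • P diag(1, ρ₊, ρ₋) Pᵀ` with `P = diag(1, Q)` orthogonal,
and the ansatz reads `e^t = P diag(g^1, g^ρ₊, g^ρ₋) Pᵀ e` and `Θ^t = Θ / g`. Differentiating
`g^σ` gives `(g'/g) σ g^σ`, i.e. `-λ Θ^t` applied to `e^t`: this is (F1). The transport matrix
commutes with `Θ` and scales `e_u` by `g`, which cancels the `1/g` of `Θ^t`, so the Cauchy
constraint is transported to (F2). Finally `Σ_a Θ^t_{ua} e^t_a = Θ_uu e_u` is constant and
closed, giving (F3) and (F4).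
-/

open Matrix

namespace Matrix

variable {ι : Type*} [Fintype ι] [DecidableEq ι] {P : Matrix ι ι ℝ}

theorem conj_diagonal_mul_conj_diagonal (hP : P * Pᵀ = 1) (d d' : ι → ℝ) :
    P * diagonal d * Pᵀ * (P * diagonal d' * Pᵀ) = P * diagonal (d * d') * Pᵀ := by
  have hP' : Pᵀ * P = 1 := mul_eq_one_comm.mp hP
  calc P * diagonal d * Pᵀ * (P * diagonal d' * Pᵀ)
      = P * diagonal d * (Pᵀ * P) * diagonal d' * Pᵀ := by simp only [Matrix.mul_assoc]
    _ = P * diagonal (d * d') * Pᵀ := by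
      rw [hP', Matrix.mul_one, Matrix.mul_assoc P, diagonal_mul_diagonal]; rfl

theorem commute_conj_diagonal (hP : P * Pᵀ = 1) (d d' : ι → ℝ) :
    Commute (P * diagonal d * Pᵀ) (P * diagonal d' * Pᵀ) := by
  rw [Commute, SemiconjBy, conj_diagonal_mul_conj_diagonal hP, conj_diagonal_mul_conj_diagonal hP,
    mul_comm]

theorem hasDerivAt_conj_diagonal_apply {f : ℝ → ι → ℝ} {f' : ι → ℝ} {t : ℝ}
    (hf : ∀ k, HasDerivAt (fun s => f s k) (f' k) t) (R : Matrix ι ι ℝ) (i j : ι) :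
    HasDerivAt (fun s => (P * diagonal (f s) * R) i j) ((P * diagonal f' * R) i j) t := by
  simp only [mul_apply, diagonal_apply, mul_ite, mul_zero, Finset.sum_ite_eq', Finset.mem_univ,
    if_true]
  exact HasDerivAt.fun_sum fun k _ => ((hf k).const_mul (P i k)).mul_const (R k j)

theorem hasDerivAt_conj_diagonal_rpow_apply (hP : P * Pᵀ = 1) {g : ℝ → ℝ} {g' t : ℝ}
    (hg : HasDerivAt g g' t) (hgt : g t ≠ 0) (σ : ι → ℝ) (i j : ι) :
    HasDerivAt (fun s => (P * diagonal (fun k => g s ^ σ k) * Pᵀ) i j)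
      (g' / g t * (P * diagonal σ * Pᵀ * (P * diagonal (fun k => g t ^ σ k) * Pᵀ)) i j) t := by
  rw [conj_diagonal_mul_conj_diagonal hP, ← smul_eq_mul, ← smul_apply, ← Matrix.smul_mul,
    ← Matrix.mul_smul, ← diagonal_smul]
  convert hasDerivAt_conj_diagonal_apply (fun k => hg.rpow_const (p := σ k) (Or.inl hgt)) Pᵀ i j
    using 4
  ext k
  simp only [Pi.smul_apply, Pi.mul_apply, Real.rpow_sub_one hgt, smul_eq_mul]
  field_simp

end Matrix

section BlockDiag

variable {α : Type*}

def blockDiagOneTwo [Zero α] (a : α) (R : Matrix (Fin 2) (Fin 2) α) : Matrix (Fin 3) (Fin 3) α :=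
  !![a, 0, 0; 0, R 0 0, R 0 1; 0, R 1 0, R 1 1]

theorem blockDiagOneTwo_mul [Semiring α] (a b : α) (R S : Matrix (Fin 2) (Fin 2) α) :
    blockDiagOneTwo a R * blockDiagOneTwo b S = blockDiagOneTwo (a * b) (R * S) := by
  ext i j
  fin_cases i <;> fin_cases j <;>
    simp [blockDiagOneTwo, mul_apply, Fin.sum_univ_three, Fin.sum_univ_two]

theorem blockDiagOneTwo_transpose [Zero α] (a : α) (R : Matrix (Fin 2) (Fin 2) α) :
    (blockDiagOneTwo a R)ᵀ = blockDiagOneTwo a Rᵀ := by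
  ext i j
  fin_cases i <;> fin_cases j <;> simp [blockDiagOneTwo]

theorem blockDiagOneTwo_one [Zero α] [One α] : blockDiagOneTwo (1 : α) 1 = 1 := by
  ext i j
  fin_cases i <;> fin_cases j <;> simp [blockDiagOneTwo]

theorem smul_blockDiagOneTwo [MulZeroClass α] (c a : α) (R : Matrix (Fin 2) (Fin 2) α) :
    c • blockDiagOneTwo a R = blockDiagOneTwo (c * a) (c • R) := by
  ext i j
  fin_cases i <;> fin_cases j <;> simp [blockDiagOneTwo]

theorem diagonal_eq_blockDiagOneTwo [Zero α] (d : Fin 3 → α) :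
    diagonal d = blockDiagOneTwo (d 0) (diagonal ![d 1, d 2]) := by
  ext i j
  fin_cases i <;> fin_cases j <;> simp [blockDiagOneTwo]

theorem blockDiagOneTwo_mul_diagonal_mul_transpose [Semiring α] (Q : Matrix (Fin 2) (Fin 2) α)
    (d : Fin 3 → α) :
    blockDiagOneTwo 1 Q * diagonal d * (blockDiagOneTwo 1 Q)ᵀ
      = blockDiagOneTwo (d 0) (Q * diagonal ![d 1, d 2] * Qᵀ) := by
  rw [diagonal_eq_blockDiagOneTwo, blockDiagOneTwo_transpose, blockDiagOneTwo_mul,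
    blockDiagOneTwo_mul, one_mul, mul_one]

theorem blockDiagOneTwo_mul_transpose_eq_one [Semiring α] {Q : Matrix (Fin 2) (Fin 2) α}
    (hQ : Q * Qᵀ = 1) : blockDiagOneTwo 1 Q * (blockDiagOneTwo 1 Q)ᵀ = 1 := by
  rw [blockDiagOneTwo_transpose, blockDiagOneTwo_mul, mul_one, hQ, blockDiagOneTwo_one]

theorem eq_sum_blockDiagOneTwo_smul [Semiring α] {V : Type*} [AddCommMonoid V] [Module α V]
    {f e : Fin 3 → V} {a : α} {R : Matrix (Fin 2) (Fin 2) α} (h0 : f 0 = a • e 0)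
    (h1 : f 1 = R 0 0 • e 1 + R 0 1 • e 2) (h2 : f 2 = R 1 0 • e 1 + R 1 1 • e 2) (i : Fin 3) :
    f i = ∑ j, blockDiagOneTwo a R i j • e j := by
  fin_cases i <;> simp [blockDiagOneTwo, Fin.sum_univ_three, h0, h1, h2]

end BlockDiag

section QuasiDiagonal

variable {Θ : Matrix (Fin 3) (Fin 3) ℝ}

theorem Matrix.IsSymm.eq_blockDiagOneTwo (hsym : Θ.IsSymm) (h01 : Θ 0 1 = 0) (h02 : Θ 0 2 = 0) :
    Θ = blockDiagOneTwo (Θ 0 0) !![Θ 1 1, Θ 1 2; Θ 1 2, Θ 2 2] := by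
  ext i j
  fin_cases i <;> fin_cases j <;>
    simp [blockDiagOneTwo, h01, h02, hsym.apply 0 1, hsym.apply 0 2, hsym.apply 1 2]

theorem Matrix.IsSymm.eq_smul_conj_diagonal (hsym : Θ.IsSymm) (h01 : Θ 0 1 = 0)
    (h02 : Θ 0 2 = 0) (huu : Θ 0 0 ≠ 0) {Q : Matrix (Fin 2) (Fin 2) ℝ} {ρp ρm : ℝ}
    (hdiag : (Θ 0 0)⁻¹ • !![Θ 1 1, Θ 1 2; Θ 1 2, Θ 2 2] = Q * diagonal ![ρp, ρm] * Qᵀ) :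
    Θ = Θ 0 0 • (blockDiagOneTwo 1 Q * diagonal ![1, ρp, ρm] * (blockDiagOneTwo 1 Q)ᵀ) := by
  rw [blockDiagOneTwo_mul_diagonal_mul_transpose, smul_blockDiagOneTwo]
  simp only [Matrix.cons_val_zero, Matrix.cons_val_one, Matrix.cons_val_two, Matrix.head_cons,
    Matrix.tail_cons, mul_one]
  rw [← hdiag, smul_smul, mul_inv_cancel₀ huu, one_smul]
  exact hsym.eq_blockDiagOneTwo h01 h02

theorem Matrix.IsSymm.inv_smul_eq (hsym : Θ.IsSymm) (h01 : Θ 0 1 = 0) (h02 : Θ 0 2 = 0)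
    (c : ℝ) :
    c⁻¹ • Θ = !![Θ 0 0 / c, 0, 0; 0, Θ 1 1 / c, Θ 1 2 / c; 0, Θ 1 2 / c, Θ 2 2 / c] := by
  conv_lhs => rw [hsym.eq_blockDiagOneTwo h01 h02]
  ext i j
  fin_cases i <;> fin_cases j <;> simp [blockDiagOneTwo, div_eq_inv_mul]

theorem sum_inv_smul_apply_zero_smul {V : Type*} [AddCommGroup V] [Module ℝ V]
    (h01 : Θ 0 1 = 0) (h02 : Θ 0 2 = 0) {c : ℝ} (hc : c ≠ 0) {f : Fin 3 → V} {v : V}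
    (hf : f 0 = c • v) : ∑ a, (c⁻¹ • Θ) 0 a • f a = Θ 0 0 • v := by
  simp only [Fin.sum_univ_three, Matrix.smul_apply, h01, h02, hf, smul_smul, smul_eq_mul,
    mul_zero, zero_smul, add_zero]
  rw [mul_comm c⁻¹, inv_mul_cancel_right₀ hc]

end QuasiDiagonal

theorem hasDerivAt_Bfun {lam : ℝ → ℝ} (hlam : Continuous lam) (t : ℝ) :
    HasDerivAt (Bfun lam) (lam t) t :=
  (hlam.integral_hasStrictDerivAt 0 t).hasDerivAt

section Flow

variable {e : Fin 3 → Module.Dual ℝ 𝔤} {Θ : Matrix (Fin 3) (Fin 3) ℝ}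
  {Θfam : ℝ → Matrix (Fin 3) (Fin 3) ℝ} {eT : ℝ → Fin 3 → Module.Dual ℝ 𝔤} {t : ℝ}

theorem IsCauchyPair.apply_zero_lie_eq_zero (h : IsCauchyPair e Θ) (h01 : Θ 0 1 = 0)
    (h02 : Θ 0 2 = 0) (X Y : 𝔤) : e 0 ⁅X, Y⁆ = 0 := by
  have := h.2.2 0 X Y
  rw [Fin.sum_univ_three, h01, h02] at this
  linear_combination -this

theorem F1At_of_hasDerivAt {lam : ℝ → ℝ} {N : ℝ → Matrix (Fin 3) (Fin 3) ℝ}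
    (heT : ∀ s a, eT s a = ∑ b, N s a b • e b)
    (hN : ∀ a b, HasDerivAt (fun s => N s a b) (-(lam t * (Θfam t * N t) a b)) t) :
    F1At lam Θfam eT t := by
  intro a X
  simp only [heT, LinearMap.sum_apply, LinearMap.smul_apply, smul_eq_mul]
  refine (HasDerivAt.fun_sum fun b _ => (hN a b).mul_const (e b X)).congr_deriv ?_
  simp only [mul_apply, Finset.mul_sum, Finset.sum_mul, ← Finset.sum_neg_distrib]
  rw [Finset.sum_comm]
  exact Finset.sum_congr rfl fun _ _ => Finset.sum_congr rfl fun _ _ => by ring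

theorem F1At_of_conj_diagonal_rpow {lam g : ℝ → ℝ} {c : ℝ} {P : Matrix (Fin 3) (Fin 3) ℝ}
    {σ : Fin 3 → ℝ} (hP : P * Pᵀ = 1) (hg : HasDerivAt g (-(c * lam t)) t) (hgt : g t ≠ 0)
    (heT : ∀ s a, eT s a = ∑ b, (P * diagonal (fun k => g s ^ σ k) * Pᵀ) a b • e b)
    (hΘt : Θfam t = (g t)⁻¹ • c • (P * diagonal σ * Pᵀ)) : F1At lam Θfam eT t := by
  refine F1At_of_hasDerivAt heT fun a b => ?_
  refine (hasDerivAt_conj_diagonal_rpow_apply hP hg hgt σ a b).congr_deriv ?_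
  simp only [hΘt, Matrix.smul_mul, Matrix.smul_apply, smul_eq_mul]
  ring

theorem F2At_of_commute {N : Matrix (Fin 3) (Fin 3) ℝ} {c : ℝ} (hC : IsCauchyPair e Θ)
    (heT : ∀ a, eT t a = ∑ b, N a b • e b) (heT0 : eT t 0 = c • e 0) (hc : c ≠ 0)
    (hΘt : Θfam t = c⁻¹ • Θ) (hcomm : Commute Θ N) : F2At Θfam eT t := by
  intro a X Y
  set w : Fin 3 → ℝ := fun b => e b X * e 0 Y - e b Y * e 0 X
  calc -(eT t a ⁅X, Y⁆) = (N *ᵥ (Θ *ᵥ w)) a := by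
        simp only [heT, LinearMap.sum_apply, LinearMap.smul_apply, smul_eq_mul, mulVec, dotProduct,
          ← Finset.sum_neg_distrib, ← mul_neg, hC.2.2]
        rfl
    _ = (Θ *ᵥ (N *ᵥ w)) a := by rw [mulVec_mulVec, mulVec_mulVec, hcomm.eq]
    _ = ∑ b, Θfam t a b * (eT t b X * eT t 0 Y - eT t b Y * eT t 0 X) := by
        simp only [hΘt, heT0, heT, mulVec, dotProduct, w, Matrix.smul_apply, LinearMap.sum_apply,
          LinearMap.smul_apply, smul_eq_mul, Finset.sum_mul, Finset.mul_sum, ← Finset.sum_sub_distrib]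
        refine Finset.sum_congr rfl fun b _ => Finset.sum_congr rfl fun d _ => ?_
        field_simp

theorem F3At_of_eventually_eq {ω : Module.Dual ℝ 𝔤}
    (h : ∀ᶠ s in nhds t, ∑ a, Θfam s 0 a • eT s a = ω) : F3At Θfam eT t := by
  intro X
  refine (hasDerivAt_const t (ω X)).congr_of_eventuallyEq ?_
  filter_upwards [h] with s hs
  simp [← hs]

theorem F4At_of_eq {ω : Module.Dual ℝ 𝔤} (h : ∑ a, Θfam t 0 a • eT t a = ω)
    (hω : ∀ X Y : 𝔤, ω ⁅X, Y⁆ = 0) : F4At Θfam eT t := by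
  intro X Y
  simpa [← h] using hω X Y

end Flow

theorem quasiDiagonal_parallel_spinor_flow_general
    {𝔤 : Type*} [LieRing 𝔤] [LieAlgebra ℝ 𝔤]
    (e : Fin 3 → Module.Dual ℝ 𝔤) (Θ : Matrix (Fin 3) (Fin 3) ℝ)
    (hCauchy : IsCauchyPair e Θ)
    (hqd1 : Θ 0 1 = 0) (hqd2 : Θ 0 2 = 0) (huu : Θ 0 0 ≠ 0)
    (lam : ℝ → ℝ) (hlam : ContDiff ℝ (⊤ : ℕ∞) lam)
    (I : Set ℝ)
    (hpos : ∀ t ∈ I, 0 < 1 - Θ 0 0 * Bfun lam t)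
    (Q : Matrix (Fin 2) (Fin 2) ℝ) (hQ : Q * Q.transpose = 1)
    (ρp ρm : ℝ)
    (hdiag : (Θ 0 0)⁻¹ • !![Θ 1 1, Θ 1 2; Θ 1 2, Θ 2 2]
      = Q * Matrix.diagonal ![ρp, ρm] * Q.transpose)
    (M : ℝ → Matrix (Fin 2) (Fin 2) ℝ)
    (hM : ∀ t, M t = Q * Matrix.diagonal
        ![(1 - Θ 0 0 * Bfun lam t) ^ ρp, (1 - Θ 0 0 * Bfun lam t) ^ ρm] * Q.transpose)
    (eT : ℝ → Fin 3 → Module.Dual ℝ 𝔤)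
    (heT0 : ∀ t, eT t 0 = (1 - Θ 0 0 * Bfun lam t) • e 0)
    (heT1 : ∀ t, eT t 1 = M t 0 0 • e 1 + M t 0 1 • e 2)
    (heT2 : ∀ t, eT t 2 = M t 1 0 • e 1 + M t 1 1 • e 2)
    (Θfam : ℝ → Matrix (Fin 3) (Fin 3) ℝ)
    (hΘfam : ∀ t, Θfam t =
      !![Θ 0 0 / (1 - Θ 0 0 * Bfun lam t), 0, 0;
         0, Θ 1 1 / (1 - Θ 0 0 * Bfun lam t), Θ 1 2 / (1 - Θ 0 0 * Bfun lam t);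
         0, Θ 1 2 / (1 - Θ 0 0 * Bfun lam t), Θ 2 2 / (1 - Θ 0 0 * Bfun lam t)]) :
    (∀ t ∈ I, F1At lam Θfam eT t ∧ F2At Θfam eT t ∧ F3At Θfam eT t ∧ F4At Θfam eT t) ∧
    eT 0 = e := by
  obtain ⟨g, hg_def⟩ : ∃ g : ℝ → ℝ, ∀ s, 1 - Θ 0 0 * Bfun lam s = g s := ⟨_, fun _ => rfl⟩
  simp only [hg_def] at hpos hM heT0 hΘfam
  have hg : ∀ s, HasDerivAt g (-(Θ 0 0 * lam s)) s := fun s => by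
    rw [← funext hg_def]
    exact ((hasDerivAt_Bfun hlam.continuous s).const_mul (Θ 0 0)).const_sub 1
  set P := blockDiagOneTwo 1 Q
  have hP : P * Pᵀ = 1 := blockDiagOneTwo_mul_transpose_eq_one hQ
  have hΘ := hCauchy.2.1.eq_smul_conj_diagonal hqd1 hqd2 huu hdiag
  have hΘt : ∀ s, Θfam s = (g s)⁻¹ • Θ := fun s => by
    rw [hΘfam, hCauchy.2.1.inv_smul_eq hqd1 hqd2]
  have heT : ∀ s a, eT s a = ∑ b, (P * diagonal (fun k => g s ^ ![1, ρp, ρm] k) * Pᵀ) a b • e b := by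
    intro s
    simpa [P, blockDiagOneTwo_mul_diagonal_mul_transpose, ← hM] using
      eq_sum_blockDiagOneTwo_smul (heT0 s) (heT1 s) (heT2 s)
  have hu : ∀ s, g s ≠ 0 → ∑ a, Θfam s 0 a • eT s a = Θ 0 0 • e 0 := fun s hs => by
    rw [hΘt]; exact sum_inv_smul_apply_zero_smul hqd1 hqd2 hs (heT0 s)
  refine ⟨fun t ht => ⟨?_, ?_, ?_, ?_⟩, ?_⟩
  · exact F1At_of_conj_diagonal_rpow hP (hg t) (hpos t ht).ne' heT (hΘ ▸ hΘt t)
  · exact F2At_of_commute hCauchy (heT t) (heT0 t) (hpos t ht).ne' (hΘt t)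
      (hΘ ▸ (commute_conj_diagonal hP _ _).smul_left _)
  · exact F3At_of_eventually_eq ((hg t).continuousAt.eventually_ne (hpos t ht).ne' |>.mono hu)
  · exact F4At_of_eq (hu t (hpos t ht).ne') fun X Y => by
      simp [hCauchy.apply_zero_lie_eq_zero hqd1 hqd2]
  · funext a
    simpa [← hg_def, Bfun, hP, Matrix.one_apply] using heT 0 a

/-- Classification of quasi-diagonal left-invariant parallel spinor flows: for a quasi-diagonal
left-invariant parallel Cauchy pair `(e, Θ)` with `Θ_{uu} ≠ 0`, the explicit family of coframes
obtained by diagonalizing `θ/Θ_{uu} = Q diag(ρ₊,ρ₋) Qᵀ`, together with the explicit shape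
operator family, is a left-invariant parallel spinor flow with initial coframe `e`. -/
theorem quasiDiagonal_parallel_spinor_flow
    {𝔤 : Type*} [LieRing 𝔤] [LieAlgebra ℝ 𝔤]
    (hdim : Module.finrank ℝ 𝔤 = 3)
    (e : Fin 3 → Module.Dual ℝ 𝔤) (Θ : Matrix (Fin 3) (Fin 3) ℝ)
    (hCauchy : IsCauchyPair e Θ)
    (hqd1 : Θ 0 1 = 0) (hqd2 : Θ 0 2 = 0) (huu : Θ 0 0 ≠ 0)
    (lam : ℝ → ℝ) (hlam : ContDiff ℝ (⊤ : ℕ∞) lam) (hlam0 : ∀ t, lam t ≠ 0)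
    (I : Set ℝ) (h0I : (0:ℝ) ∈ I) (hI : I.OrdConnected)
    (hpos : ∀ t ∈ I, 0 < 1 - Θ 0 0 * Bfun lam t)
    (Q : Matrix (Fin 2) (Fin 2) ℝ) (hQ : Q * Q.transpose = 1)
    (ρp ρm : ℝ)
    (hdiag : (Θ 0 0)⁻¹ • !![Θ 1 1, Θ 1 2; Θ 1 2, Θ 2 2]
      = Q * Matrix.diagonal ![ρp, ρm] * Q.transpose)
    (M : ℝ → Matrix (Fin 2) (Fin 2) ℝ)
    (hM : ∀ t, M t = Q * Matrix.diagonal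
        ![(1 - Θ 0 0 * Bfun lam t) ^ ρp, (1 - Θ 0 0 * Bfun lam t) ^ ρm] * Q.transpose)
    (eT : ℝ → Fin 3 → Module.Dual ℝ 𝔤)
    (heT0 : ∀ t, eT t 0 = (1 - Θ 0 0 * Bfun lam t) • e 0)
    (heT1 : ∀ t, eT t 1 = M t 0 0 • e 1 + M t 0 1 • e 2)
    (heT2 : ∀ t, eT t 2 = M t 1 0 • e 1 + M t 1 1 • e 2)
    (Θfam : ℝ → Matrix (Fin 3) (Fin 3) ℝ)
    (hΘfam : ∀ t, Θfam t =
      !![Θ 0 0 / (1 - Θ 0 0 * Bfun lam t), 0, 0;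
         0, Θ 1 1 / (1 - Θ 0 0 * Bfun lam t), Θ 1 2 / (1 - Θ 0 0 * Bfun lam t);
         0, Θ 1 2 / (1 - Θ 0 0 * Bfun lam t), Θ 2 2 / (1 - Θ 0 0 * Bfun lam t)]) :
    (∀ t ∈ I, F1At lam Θfam eT t ∧ F2At Θfam eT t ∧ F3At Θfam eT t ∧ F4At Θfam eT t) ∧
    eT 0 = e :=
  quasiDiagonal_parallel_spinor_flow_general e Θ hCauchy hqd1 hqd2 huu lam hlam I hpos Q hQ ρp ρm
    hdiag M hM eT heT0 heT1 heT2 Θfam hΘfam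
end
end

section
/- Let 𝔤 be a 3-dimensional real Lie algebra, let λ : I → ℝ be differentiable and nowhere zero on an interval I, let t ↦ Θ^t_{ab} be a differentiable family of symmetric real 3×3 matrices satisfying the integrability conditions on I, and let e^t be a family of left-invariant coframes satisfying the flow equation (F1): ∂_t e^t_a(X) + λ_t Σ_b Θ^t_{ab} e^t_b(X) = 0 for all a ∈ {u,l,n} and X ∈ 𝔤. For each a define the family of alternating 2-forms 𝔴^t_a(X,Y) := −e^t_a([X,Y]) − Σ_b Θ^t_{ab} (e^t_b(X) e^t_u(Y) − e^t_b(Y) e^t_u(X)). Then for all t ∈ I, all a, and all X, Y ∈ 𝔤: ∂_t 𝔴^t_a(X,Y) = −λ_t Σ_d Θ^t_{ad} 𝔴^t_d(X,Y). In particular, if 𝔴^0_a = 0 for all a, then 𝔴^t_a = 0 for all t ∈ I, i.e. the constraint (F2) propagates along the flow. -/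
noncomputable section

variable {𝔤 : Type*} [LieRing 𝔤] [LieAlgebra ℝ 𝔤]

/-- The obstruction two-forms `𝔴^t_a(X,Y)` measuring the failure of constraint (F2). -/
def wform (Θ : ℝ → Matrix (Fin 3) (Fin 3) ℝ) (e : ℝ → Fin 3 → Module.Dual ℝ 𝔤)
    (s : ℝ) (a : Fin 3) (X Y : 𝔤) : ℝ :=
  -(e s a ⁅X, Y⁆) - ∑ b, Θ s a b * (e s b X * e s 0 Y - e s b Y * e s 0 X)


/-! Differentiating `𝔴_a` along (F1), the terms quadratic in `Θ` cancel and what is left is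
`Σ_b Θ̇_{ab} e_b ∧ e_u − λ Σ_{b,c} Θ_{ab} Θ_{uc} e_b ∧ e_c`, which the integrability conditions
make vanish. Hence `𝔴` solves the linear ODE `𝔴̇ = −λ Θ 𝔴`, and Grönwall's inequality, run
forwards and backwards in time from `t = 0`, shows that a solution vanishing at `0` vanishes on
the whole interval. -/

open Set Matrix

section Gronwall

variable {E : Type*} [NormedAddCommGroup E] [NormedSpace ℝ E] {f f' : ℝ → E} {K : ℝ → ℝ}

theorem eq_zero_of_norm_deriv_le_mul_norm_Icc {a b : ℝ} (hK : ContinuousOn K (Icc a b))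
    (hf : ∀ t ∈ Icc a b, HasDerivAt f (f' t) t) (bound : ∀ t ∈ Icc a b, ‖f' t‖ ≤ K t * ‖f t‖)
    (ha : f a = 0) : ∀ t ∈ Icc a b, f t = 0 := by
  obtain ⟨C, hC⟩ := isCompact_Icc.bddAbove_image hK
  refine eq_zero_of_abs_deriv_le_mul_abs_self_of_eq_zero_right (K := C)
    (fun t ht => (hf t ht).continuousAt.continuousWithinAt)
    (fun t ht => (hf t (Ico_subset_Icc_self ht)).hasDerivWithinAt) ha fun t ht => ?_
  have ht := Ico_subset_Icc_self ht
  exact (bound t ht).trans <|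
    mul_le_mul_of_nonneg_right (hC (mem_image_of_mem K ht)) (norm_nonneg _)

theorem Set.OrdConnected.eq_zero_of_norm_deriv_le_mul_norm {I : Set ℝ} (hI : I.OrdConnected)
    {t₀ : ℝ} (ht₀ : t₀ ∈ I) (hK : ContinuousOn K I) (hf : ∀ t ∈ I, HasDerivAt f (f' t) t)
    (bound : ∀ t ∈ I, ‖f' t‖ ≤ K t * ‖f t‖) (h0 : f t₀ = 0) : ∀ t ∈ I, f t = 0 := by
  intro t ht
  rcases le_total t₀ t with h | h
  · have hsub := hI.out ht₀ ht
    exact eq_zero_of_norm_deriv_le_mul_norm_Icc (hK.mono hsub) (fun s hs => hf s (hsub hs))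
      (fun s hs => bound s (hsub hs)) h0 t (right_mem_Icc.2 h)
  · have hsub : ∀ s ∈ Icc (-t₀) (-t), -s ∈ I := fun s hs =>
      hI.out ht ht₀ ⟨le_neg.1 hs.2, neg_le.1 hs.1⟩
    have := eq_zero_of_norm_deriv_le_mul_norm_Icc (f := fun s => f (-s))
      (f' := fun s => (-1 : ℝ) • f' (-s)) (K := fun s => K (-s))
      (hK.comp continuousOn_neg hsub)
      (fun s hs => (hf (-s) (hsub s hs)).scomp s (hasDerivAt_neg s))
      (fun s hs => by simpa using bound (-s) (hsub s hs)) (by simpa using h0)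
      (-t) (right_mem_Icc.2 (neg_le_neg h))
    simpa using this

end Gronwall

attribute [local instance] Matrix.linftyOpNormedAddCommGroup

theorem Set.OrdConnected.eq_zero_of_hasDerivAt_mulVec {m : Type*} [Fintype m] {I : Set ℝ}
    (hI : I.OrdConnected) {t₀ : ℝ} (ht₀ : t₀ ∈ I) {A : ℝ → Matrix m m ℝ} (hA : ContinuousOn A I)
    {w : ℝ → m → ℝ} (hw : ∀ t ∈ I, HasDerivAt w (A t *ᵥ w t) t) (h0 : w t₀ = 0) :
    ∀ t ∈ I, w t = 0 :=
  hI.eq_zero_of_norm_deriv_le_mul_norm ht₀ (continuous_norm.comp_continuousOn hA) hw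
    (fun _ _ => linfty_opNorm_mulVec _ _) h0

section Flow

variable {lam : ℝ → ℝ}
  {Θ : ℝ → Matrix (Fin 3) (Fin 3) ℝ} {e : ℝ → Fin 3 → Module.Dual ℝ 𝔤} {t : ℝ}

theorem hasDerivAt_wform {Θ' : Matrix (Fin 3) (Fin 3) ℝ} (hF1 : F1At lam Θ e t)
    (hΘ : ∀ a b, HasDerivAt (fun s => Θ s a b) (Θ' a b) t)
    (hΘ' : ∀ a (x y : Fin 3 → ℝ), ∑ b, Θ' a b * (x b * y 0 - y b * x 0)
      = lam t * ∑ b, ∑ c, Θ t a b * Θ t 0 c * (x b * y c - y b * x c))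
    (a : Fin 3) (X Y : 𝔤) :
    HasDerivAt (fun s => wform Θ e s a X Y) (-(lam t * ∑ d, Θ t a d * wform Θ e t d X Y)) t := by
  have h := (hF1 a ⁅X, Y⁆).neg.sub <| HasDerivAt.fun_sum (u := Finset.univ) fun b _ =>
    (hΘ a b).mul (((hF1 b X).mul (hF1 0 Y)).sub ((hF1 b Y).mul (hF1 0 X)))
  refine h.congr_deriv ?_
  have := hΘ' a (fun b => e t b X) (fun b => e t b Y)
  simp only [wform, Fin.sum_univ_three, Pi.sub_apply, Pi.mul_apply] at this ⊢
  linear_combination -this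

theorem IntegrabilityAt.sum_deriv_mul_wedge (hint : IntegrabilityAt lam Θ t)
    (hsymm : ∀ s, (Θ s).IsSymm) (a : Fin 3) (x y : Fin 3 → ℝ) :
    ∑ b, deriv (fun s => Θ s a b) t * (x b * y 0 - y b * x 0)
      = lam t * ∑ b, ∑ c, Θ t a b * Θ t 0 c * (x b * y c - y b * x c) := by
  obtain ⟨-, h01, h02, h11, h12, h22, hl, hn, -, -⟩ := hint
  have s10 : Θ t 1 0 = Θ t 0 1 := (hsymm t).apply 0 1
  have s20 : Θ t 2 0 = Θ t 0 2 := (hsymm t).apply 0 2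
  have s21 : Θ t 2 1 = Θ t 1 2 := (hsymm t).apply 1 2
  have d21 : (fun s => Θ s 2 1) = fun s => Θ s 1 2 := funext fun s => (hsymm s).apply 1 2
  fin_cases a <;>
    simp only [Fin.zero_eta, Fin.mk_one, Fin.reduceFinMk, Fin.isValue, Fin.sum_univ_three, d21,
      h01, h02, h11, h12, h22, s10, s20, s21]
  · ring
  · linear_combination lam t * (x 1 * y 2 - y 1 * x 2) * hl
  · linear_combination -(lam t * (x 1 * y 2 - y 1 * x 2)) * hn

end Flow

theorem constraint_propagation_general
    {𝔤 : Type*} [LieRing 𝔤] [LieAlgebra ℝ 𝔤]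
    (I : Set ℝ) (h0I : (0:ℝ) ∈ I) (hI : I.OrdConnected)
    (lam : ℝ → ℝ) (hlamdiff : ∀ t ∈ I, DifferentiableAt ℝ lam t)
    (Θ : ℝ → Matrix (Fin 3) (Fin 3) ℝ)
    (hΘsymm : ∀ t, (Θ t).IsSymm)
    (hΘdiff : ∀ a b : Fin 3, ∀ t ∈ I, DifferentiableAt ℝ (fun s => Θ s a b) t)
    (hint : ∀ t ∈ I, IntegrabilityAt lam Θ t)
    (e : ℝ → Fin 3 → Module.Dual ℝ 𝔤)
    (hF1 : ∀ t ∈ I, F1At lam Θ e t) :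
    (∀ t ∈ I, ∀ (a : Fin 3) (X Y : 𝔤),
      HasDerivAt (fun s => wform Θ e s a X Y)
        (-(lam t * ∑ d, Θ t a d * wform Θ e t d X Y)) t) ∧
    ((∀ (a : Fin 3) (X Y : 𝔤), wform Θ e 0 a X Y = 0) →
      ∀ t ∈ I, ∀ (a : Fin 3) (X Y : 𝔤), wform Θ e t a X Y = 0) := by
  have hODE : ∀ t ∈ I, ∀ (a : Fin 3) (X Y : 𝔤), HasDerivAt (fun s => wform Θ e s a X Y)
      (-(lam t * ∑ d, Θ t a d * wform Θ e t d X Y)) t := fun t ht =>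
    hasDerivAt_wform (hF1 t ht) (fun a b => (hΘdiff a b t ht).hasDerivAt)
      ((hint t ht).sum_deriv_mul_wedge hΘsymm)
  refine ⟨hODE, fun h0 t ht a X Y => ?_⟩
  have hA : ContinuousOn (fun s => -lam s • Θ s) I := fun s hs =>
    ((hlamdiff s hs).continuousAt.neg.smul <| continuousAt_pi.2 fun a =>
      continuousAt_pi.2 fun b => (hΘdiff a b s hs).continuousAt).continuousWithinAt
  have hW : ∀ s ∈ I, HasDerivAt (fun r c => wform Θ e r c X Y)
      ((-lam s • Θ s) *ᵥ fun c => wform Θ e s c X Y) s := fun s hs =>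
    (hasDerivAt_pi.2 fun c => hODE s hs c X Y).congr_deriv <| by
      ext c
      simp [mulVec, dotProduct, Finset.mul_sum, mul_assoc]
  exact congrFun (hI.eq_zero_of_hasDerivAt_mulVec h0I hA hW (funext fun c => h0 c X Y) t ht) a

/-- Propagation of the constraint (F2) along the flow (F1): the obstruction forms `𝔴^t_a`
satisfy the linear ODE `∂ₜ 𝔴^t_a = −λ_t Σ_d Θ^t_{ad} 𝔴^t_d`; in particular if they vanish at
`t = 0` they vanish on all of `I`. -/
theorem constraint_propagation
    {𝔤 : Type*} [LieRing 𝔤] [LieAlgebra ℝ 𝔤]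
    (hdim : Module.finrank ℝ 𝔤 = 3)
    (I : Set ℝ) (h0I : (0:ℝ) ∈ I) (hI : I.OrdConnected)
    (lam : ℝ → ℝ) (hlamdiff : ∀ t ∈ I, DifferentiableAt ℝ lam t)
    (hlam0 : ∀ t ∈ I, lam t ≠ 0)
    (Θ : ℝ → Matrix (Fin 3) (Fin 3) ℝ)
    (hΘsymm : ∀ t, (Θ t).IsSymm)
    (hΘdiff : ∀ a b : Fin 3, ∀ t ∈ I, DifferentiableAt ℝ (fun s => Θ s a b) t)
    (hint : ∀ t ∈ I, IntegrabilityAt lam Θ t)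
    (e : ℝ → Fin 3 → Module.Dual ℝ 𝔤)
    (hcof : ∀ t, IsCoframe (e t))
    (hF1 : ∀ t ∈ I, F1At lam Θ e t) :
    (∀ t ∈ I, ∀ (a : Fin 3) (X Y : 𝔤),
      HasDerivAt (fun s => wform Θ e s a X Y)
        (-(lam t * ∑ d, Θ t a d * wform Θ e t d X Y)) t) ∧
    ((∀ (a : Fin 3) (X Y : 𝔤), wform Θ e 0 a X Y = 0) →
      ∀ t ∈ I, ∀ (a : Fin 3) (X Y : 𝔤), wform Θ e t a X Y = 0) :=
  constraint_propagation_general I h0I hI lam hlamdiff Θ hΘsymm hΘdiff hint e hF1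
end
end

section
/- Let 𝔤 be a 3-dimensional real Lie algebra, e^t a family of left-invariant coframes on an interval I, λ : I → ℝ nowhere zero, and t ↦ Θ^t_{ab} a differentiable family of symmetric real 3×3 matrices. (a) If the flow equation (F1) ∂_t e^t_a(X) = −λ_t Σ_b Θ^t_{ab} e^t_b(X) holds for all a and X, then equation (F3) ∂_t (Σ_a Θ^t_{ua} e^t_a(X)) = 0 for all X holds at time t if and only if ∂_t Θ^t_{ub} = λ_t Σ_a Θ^t_{ua} Θ^t_{ab} for every b ∈ {u,l,n}. (b) If the constraint (F2) −e^t_a([X,Y]) = Σ_b Θ^t_{ab} (e^t_b(X) e^t_u(Y) − e^t_b(Y) e^t_u(X)) holds for all a, X, Y, then equation (F4) Σ_a Θ^t_{ua} e^t_a([X,Y]) = 0 for all X, Y holds at time t if and only if Σ_a Θ^t_{ua} Θ^t_{al} = 0 and Σ_a Θ^t_{ua} Θ^t_{an} = 0. -/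
/-!
Both equivalences come down to the linear independence of the coframe `e^t`: a finite linearly
independent family of functionals has independent coefficients and admits dual vectors `V_b` with
`e_a(V_b) = δ_ab`. For (a), (F1) and the product rule give
`∂ₜ Σ_a Θ_{ua} e_a(X) = Σ_b (∂ₜ Θ_{ub} - λ (Θ²)_{ub}) e_b(X)`. For (b), (F2) turns
`Σ_a Θ_{ua} e_a([X,Y])` into `-Σ_b (Θ²)_{ub} (e_b(X) e_u(Y) - e_b(Y) e_u(X))`, whose `b = u` term
vanishes and whose other coefficients are read off at `(X, Y) = (V_b, V_u)`.
-/

noncomputable section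

variable {𝔤 : Type*} [LieRing 𝔤] [LieAlgebra ℝ 𝔤]

section DualFamily

open Module

variable {K V ι : Type*} [Field K] [AddCommGroup V] [Module K V] [Fintype ι] {f : ι → Dual K V}

theorem LinearIndependent.forall_sum_mul_apply_eq_zero_iff (hf : LinearIndependent K f)
    {c : ι → K} : (∀ X, ∑ i, c i * f i X = 0) ↔ c = 0 := by
  refine ⟨fun h => funext <| Fintype.linearIndependent_iff.1 hf c <|
    LinearMap.ext fun X => by simpa using h X, ?_⟩
  rintro rfl X
  simp

theorem LinearIndependent.surjective_pi (hf : LinearIndependent K f) :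
    Function.Surjective (LinearMap.pi f) := by
  have hf' : LinearIndependent K fun i => ⇑(f i) :=
    hf.map' (LinearMap.ltoFun K V K K) (LinearMap.ker_eq_bot.2 DFunLike.coe_injective)
  rw [← LinearMap.range_eq_top, ← span_flip_eq_top_iff_linearIndependent.2 hf',
    ← Submodule.span_eq (LinearMap.range _), LinearMap.coe_range]
  rfl

theorem LinearIndependent.exists_apply_eq_ite [DecidableEq ι] (hf : LinearIndependent K f) :
    ∃ v : ι → V, ∀ i j, f i (v j) = if i = j then 1 else 0 := by
  choose v hv using fun j => hf.surjective_pi (Pi.single j 1)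
  refine ⟨v, fun i j => ?_⟩
  rw [← Pi.single_apply, ← hv j, LinearMap.pi_apply]

theorem LinearIndependent.forall_sum_mul_wedge_eq_zero_iff [DecidableEq ι]
    (hf : LinearIndependent K f) (i₀ : ι) (c : ι → K) :
    (∀ X Y, ∑ i, c i * (f i X * f i₀ Y - f i Y * f i₀ X) = 0) ↔ ∀ i ≠ i₀, c i = 0 := by
  constructor
  · intro h i hi
    obtain ⟨v, hv⟩ := hf.exists_apply_eq_ite
    simpa [hv, Ne.symm hi, mul_ite] using h (v i) (v i₀)
  · intro h X Y
    refine Finset.sum_eq_zero fun i _ => ?_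
    rcases eq_or_ne i i₀ with rfl | hi
    · ring
    · rw [h i hi, zero_mul]

end DualFamily

section FlowEquations

variable {lam : ℝ → ℝ} {Θ : ℝ → Matrix (Fin 3) (Fin 3) ℝ} {e : ℝ → Fin 3 → Module.Dual ℝ 𝔤}
  {t : ℝ}

theorem hasDerivAt_sum_mul_of_F1At (hF1 : F1At lam Θ e t)
    (hΘ : ∀ b, DifferentiableAt ℝ (fun s => Θ s 0 b) t) (X : 𝔤) :
    HasDerivAt (fun s => ∑ a, Θ s 0 a * e s a X)
      (∑ b, (deriv (fun s => Θ s 0 b) t - lam t * ∑ a, Θ t 0 a * Θ t a b) * e t b X) t := by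
  refine (HasDerivAt.fun_sum (u := Finset.univ) fun a _ =>
    (hΘ a).hasDerivAt.mul (hF1 a X)).congr_deriv ?_
  simp only [Fin.sum_univ_three]
  ring

theorem F3At_iff_of_F1At (he : LinearIndependent ℝ (e t)) (hF1 : F1At lam Θ e t)
    (hΘ : ∀ b, DifferentiableAt ℝ (fun s => Θ s 0 b) t) :
    F3At Θ e t ↔ ∀ b, deriv (fun s => Θ s 0 b) t = lam t * ∑ a, Θ t 0 a * Θ t a b := by
  have hderiv := hasDerivAt_sum_mul_of_F1At hF1 hΘ
  have hF3 : F3At Θ e t ↔ ∀ X, ∑ b, (deriv (fun s => Θ s 0 b) t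
      - lam t * ∑ a, Θ t 0 a * Θ t a b) * e t b X = 0 :=
    ⟨fun h X => (hderiv X).unique (h X), fun h X => h X ▸ hderiv X⟩
  simp only [hF3, he.forall_sum_mul_apply_eq_zero_iff, funext_iff, Pi.zero_apply, sub_eq_zero]

theorem sum_mul_apply_lie_of_F2At (hF2 : F2At Θ e t) (X Y : 𝔤) :
    ∑ a, Θ t 0 a * e t a ⁅X, Y⁆ =
      -∑ b, (∑ a, Θ t 0 a * Θ t a b) * (e t b X * e t 0 Y - e t b Y * e t 0 X) := by
  have h a : e t a ⁅X, Y⁆ = -∑ b, Θ t a b * (e t b X * e t 0 Y - e t b Y * e t 0 X) := by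
    rw [← hF2 a X Y, neg_neg]
  simp only [h, Fin.sum_univ_three]
  ring

theorem F4At_iff_of_F2At (he : LinearIndependent ℝ (e t)) (hF2 : F2At Θ e t) :
    F4At Θ e t ↔ (∑ a, Θ t 0 a * Θ t a 1 = 0) ∧ (∑ a, Θ t 0 a * Θ t a 2 = 0) := by
  simp only [F4At, sum_mul_apply_lie_of_F2At hF2, neg_eq_zero]
  rw [he.forall_sum_mul_wedge_eq_zero_iff 0]
  exact ⟨fun h => ⟨h 1 (by decide), h 2 (by decide)⟩,
    fun ⟨h1, h2⟩ i hi => by fin_cases i <;> simp_all⟩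

end FlowEquations

theorem F3_F4_characterization_general
    {𝔤 : Type*} [LieRing 𝔤] [LieAlgebra ℝ 𝔤]
    (I : Set ℝ)
    (lam : ℝ → ℝ)
    (e : ℝ → Fin 3 → Module.Dual ℝ 𝔤)
    (hcof : ∀ t, IsCoframe (e t))
    (Θ : ℝ → Matrix (Fin 3) (Fin 3) ℝ)
    (hΘdiff : ∀ a b : Fin 3, ∀ t ∈ I, DifferentiableAt ℝ (fun s => Θ s a b) t)
    (t : ℝ) (ht : t ∈ I) :
    (F1At lam Θ e t →
      (F3At Θ e t ↔
        ∀ b : Fin 3, deriv (fun s => Θ s 0 b) t = lam t * ∑ a, Θ t 0 a * Θ t a b)) ∧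
    (F2At Θ e t →
      (F4At Θ e t ↔
        ((∑ a, Θ t 0 a * Θ t a 1 = 0) ∧ (∑ a, Θ t 0 a * Θ t a 2 = 0)))) := by
  have he := (hcof t).1
  exact ⟨fun hF1 => F3At_iff_of_F1At he hF1 fun b => hΘdiff 0 b t ht,
    fun hF2 => F4At_iff_of_F2At he hF2⟩

/-- (a) Along the flow (F1), equation (F3) holds at time `t` iff
`∂ₜ Θ^t_{ub} = λ_t Σ_a Θ^t_{ua} Θ^t_{ab}` for all `b`.
(b) Given the constraint (F2), equation (F4) holds at time `t` iff
`Σ_a Θ^t_{ua} Θ^t_{al} = 0` and `Σ_a Θ^t_{ua} Θ^t_{an} = 0`. -/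
theorem F3_F4_characterization
    {𝔤 : Type*} [LieRing 𝔤] [LieAlgebra ℝ 𝔤]
    (hdim : Module.finrank ℝ 𝔤 = 3)
    (I : Set ℝ)
    (lam : ℝ → ℝ) (hlam0 : ∀ t ∈ I, lam t ≠ 0)
    (e : ℝ → Fin 3 → Module.Dual ℝ 𝔤)
    (hcof : ∀ t, IsCoframe (e t))
    (hediff : ∀ (a : Fin 3) (X : 𝔤), ∀ t ∈ I, DifferentiableAt ℝ (fun s => e s a X) t)
    (Θ : ℝ → Matrix (Fin 3) (Fin 3) ℝ)
    (hΘsymm : ∀ t, (Θ t).IsSymm)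
    (hΘdiff : ∀ a b : Fin 3, ∀ t ∈ I, DifferentiableAt ℝ (fun s => Θ s a b) t)
    (t : ℝ) (ht : t ∈ I) :
    (F1At lam Θ e t →
      (F3At Θ e t ↔
        ∀ b : Fin 3, deriv (fun s => Θ s 0 b) t = lam t * ∑ a, Θ t 0 a * Θ t a b)) ∧
    (F2At Θ e t →
      (F4At Θ e t ↔
        ((∑ a, Θ t 0 a * Θ t a 1 = 0) ∧ (∑ a, Θ t 0 a * Θ t a 2 = 0)))) :=
  F3_F4_characterization_general I lam e hcof Θ hΘdiff t ht
end
end
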